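/- Given a connected sum diagram of artinian local rings with injective maps ι_R : V → R and ι_S : V → S (where V is a T-module, ε_R ι_R = ε_S ι_S), the lengths satisfy length(R #_T S) + length(T) + length(V) = length(R) + length(S). -/

import Mathlib

open RingTheory.Sequence Function

noncomputable section

/-- The fiber product `R ×_T S` as a subring of `R × S`. -/
def fiberProd {R S T : Type*} [CommRing R] [CommRing S] [CommRing T]
    (f : R →+* T) (g : S →+* T) : Subring (R × S) :=
  RingHom.eqLocus (f.comp (RingHom.fst R S)) (g.comp (RingHom.snd R S))

/-- Length of a module: the Krull dimension of its lattice of submodules. -/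
noncomputable def lenE (R M : Type*) [CommRing R] [AddCommGroup M] [Module R M] : ℕ∞ :=
  WithBot.unbotD 0 (Order.krullDim (Submodule R M))

/-- Depth of a local ring: supremum of lengths of regular sequences of nonunits. -/
noncomputable def rdepth (Q : Type*) [CommRing Q] : ℕ∞ :=
  sSup {n : ℕ∞ | ∃ rs : List Q, (∀ x ∈ rs, x ∈ nonunits Q) ∧
    RingTheory.Sequence.IsRegular Q rs ∧ (rs.length : ℕ∞) = n}

/-- A local ring is Cohen-Macaulay if its depth equals its Krull dimension. -/
def IsCMRing (Q : Type*) [CommRing Q] : Prop :=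
  (rdepth Q : WithBot ℕ∞) = ringKrullDim Q

/-- Cohen-Macaulay local ring of dimension `d`. -/
def IsCMOfDim (Q : Type*) [CommRing Q] (d : ℕ) : Prop :=
  ringKrullDim Q = ((d : ℕ∞) : WithBot ℕ∞) ∧ rdepth Q = d

/-- The socle of a module over a local ring: largest submodule killed by the maximal ideal
(= set of nonunits). -/
noncomputable def socle (Q M : Type*) [CommRing Q] [AddCommGroup M] [Module Q M] :
    Submodule Q M :=
  sSup {N : Submodule Q M | ∀ r ∈ nonunits Q, ∀ x ∈ N, r • x = 0}

/-- A local ring is Gorenstein if it is Cohen-Macaulay (there is a maximal regular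
sequence of length its Krull dimension) and of type one, i.e. the socle of the artinian
reduction is a simple module. -/
def IsGorensteinRing (Q : Type*) [CommRing Q] : Prop :=
  ∃ rs : List Q, (∀ x ∈ rs, x ∈ nonunits Q) ∧ RingTheory.Sequence.IsRegular Q rs ∧
    ((rs.length : ℕ∞) : WithBot ℕ∞) = ringKrullDim Q ∧
    IsSimpleModule Q (socle Q (Q ⧸ (Ideal.ofList rs)))

/-- Gorenstein local ring of dimension `d`. -/
def IsGorensteinOfDim (Q : Type*) [CommRing Q] (d : ℕ) : Prop :=
  ringKrullDim Q = ((d : ℕ∞) : WithBot ℕ∞) ∧ ∃ rs : List Q, (∀ x ∈ rs, x ∈ nonunits Q) ∧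
    RingTheory.Sequence.IsRegular Q rs ∧ rs.length = d ∧
    IsSimpleModule Q (socle Q (Q ⧸ (Ideal.ofList rs)))

/-- The embedding dimension: minimal number of generators of the maximal ideal
(the ideal of nonunits). -/
noncomputable def edim (Q : Type*) [CommRing Q] : ℕ :=
  sInf {n : ℕ | ∃ s : Finset Q, s.card = n ∧
    ((Ideal.span (s : Set Q) : Ideal Q) : Set Q) = nonunits Q}

/-! Put `P = R ×_T S` and let `J ⊆ P` be the image of `v ↦ (ι_R v, ι_S v)`, an ideal isomorphic
to `V`. The projection `P → R` is surjective with kernel `0 × ker ε_S ≅ ker ε_S`, so additivity of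
length gives `ℓ(P) + ℓ(T) = ℓ(R) + ℓ(S)`, while `0 → J → P → P/J → 0` gives
`ℓ(P) = ℓ(V) + ℓ(P/J)`. -/

theorem lenE_eq_length (A M : Type*) [CommRing A] [AddCommGroup M] [Module A M] :
    lenE A M = Module.length A M := by
  rw [lenE, ← Module.coe_length, WithBot.unbotD_coe]

namespace Module

section

variable {A B M N : Type*} [Ring A] [Ring B] [AddCommGroup M] [AddCommGroup N]
  [Module A M] [Module B N]

theorem length_eq_of_semilinear_bijective {σ : A →+* B} [RingHomSurjective σ]
    (f : M →ₛₗ[σ] N) (hf : Bijective f) : length A M = length B N := by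
  rw [length, length, WithBot.unbot_inj,
    Order.krullDim_eq_of_orderIso (Submodule.orderIsoMapComapOfBijective f hf)]

theorem length_eq_of_bijective_of_map_smul {σ : A →+* B} (hσ : Surjective σ) (f : N →+ M)
    (hf : Bijective f) (hsmul : ∀ (a : A) (n : N), f (σ a • n) = a • f n) :
    length B N = length A M := by
  have : RingHomSurjective σ := ⟨hσ⟩
  let e := AddEquiv.ofBijective f hf
  let g : M →ₛₗ[σ] N :=
    { toFun := e.symm
      map_add' := map_add e.symm
      map_smul' := fun a m => e.injective <| by
        rw [e.apply_symm_apply, AddEquiv.ofBijective_apply, hsmul,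
          ← AddEquiv.ofBijective_apply f hf, e.apply_symm_apply] }
  exact (length_eq_of_semilinear_bijective g e.symm.bijective).symm

theorem length_eq_length_submodule_add_length_quotient (N : Submodule A M) :
    length A M = length A N + length A (M ⧸ N) :=
  length_eq_add_of_exact N.subtype N.mkQ N.injective_subtype N.mkQ_surjective
    (LinearMap.exact_subtype_mkQ N)

end

theorem length_self_eq_length_ker_add {A B : Type*} [CommRing A] [CommRing B] {f : A →+* B}
    (hf : Surjective f) : length A A = length A (RingHom.ker f) + length B B := by
  have : RingHomSurjective f := ⟨hf⟩
  let g : (A ⧸ RingHom.ker f) →ₛₗ[f] B :=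
    { toFun := RingHom.kerLift f
      map_add' := map_add _
      map_smul' := fun a x => by
        obtain ⟨b, rfl⟩ := Ideal.Quotient.mk_surjective x
        rw [Algebra.smul_def, Ideal.Quotient.algebraMap_eq, ← map_mul, RingHom.kerLift_mk,
          RingHom.kerLift_mk, map_mul, smul_eq_mul] }
  rw [length_eq_length_submodule_add_length_quotient (RingHom.ker f),
    length_eq_of_semilinear_bijective g ⟨RingHom.kerLift_injective f, ?_⟩]
  intro b
  obtain ⟨a, rfl⟩ := hf b
  exact ⟨Ideal.Quotient.mk _ a, RingHom.kerLift_mk f a⟩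

end Module

namespace fiberProd

variable {R S T : Type*} [CommRing R] [CommRing S] [CommRing T] {eR : R →+* T} {eS : S →+* T}

theorem condition (p : fiberProd eR eS) : eR (p : R × S).1 = eS (p : R × S).2 := p.2

variable (eR eS) in
def fst : fiberProd eR eS →+* R := (RingHom.fst R S).comp (fiberProd eR eS).subtype

variable (eR eS) in
def snd : fiberProd eR eS →+* S := (RingHom.snd R S).comp (fiberProd eR eS).subtype

theorem fst_surjective (hS : Surjective eS) : Surjective (fst eR eS) := fun r => by
  obtain ⟨s, hs⟩ := hS (eR r)
  exact ⟨⟨(r, s), hs.symm⟩, rfl⟩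

theorem snd_surjective (hR : Surjective eR) : Surjective (snd eR eS) := fun s => by
  obtain ⟨r, hr⟩ := hR (eS s)
  exact ⟨⟨(r, s), hr⟩, rfl⟩

theorem snd_mem_ker_of_mem_ker_fst {p : fiberProd eR eS} (hp : p ∈ RingHom.ker (fst eR eS)) :
    (p : R × S).2 ∈ RingHom.ker eS := by
  rw [RingHom.mem_ker, ← condition, show (p : R × S).1 = 0 from hp, map_zero]

theorem length_ker_fst (hR : Surjective eR) :
    Module.length (fiberProd eR eS) (RingHom.ker (fst eR eS)) =
      Module.length S (RingHom.ker eS) := by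
  have : RingHomSurjective (snd eR eS) := ⟨snd_surjective hR⟩
  let g : RingHom.ker (fst eR eS) →ₛₗ[snd eR eS] RingHom.ker eS :=
    { toFun := fun p => ⟨_, snd_mem_ker_of_mem_ker_fst p.2⟩
      map_add' := fun _ _ => rfl
      map_smul' := fun _ _ => rfl }
  refine Module.length_eq_of_semilinear_bijective g ⟨fun p q hpq => ?_, fun s => ?_⟩
  · have hp : (p.1 : R × S).1 = 0 := p.2
    have hq : (q.1 : R × S).1 = 0 := q.2
    exact Subtype.ext <| Subtype.ext <| Prod.ext (hp.trans hq.symm) (congrArg Subtype.val hpq)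
  · have hs : eR 0 = eS s := by rw [map_zero, s.2]
    exact ⟨⟨⟨(0, s), hs⟩, rfl⟩, rfl⟩

theorem length_self_add_length (hR : Surjective eR) (hS : Surjective eS) :
    Module.length (fiberProd eR eS) (fiberProd eR eS) + Module.length T T =
      Module.length R R + Module.length S S := by
  rw [Module.length_self_eq_length_ker_add (f := fst eR eS) (fst_surjective hS),
    Module.length_self_eq_length_ker_add hS, length_ker_fst hR, add_right_comm, add_comm]

end fiberProd

section ConnectingIdeal

variable {R S T V : Type*} [CommRing R] [CommRing S] [CommRing T] [AddCommGroup V] [Module T V]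
  {eR : R →+* T} {eS : S →+* T} {iR : V →+ R} {iS : V →+ S}

def connectingIdeal (hiR : ∀ (r : R) (v : V), iR (eR r • v) = r * iR v)
    (hiS : ∀ (s : S) (v : V), iS (eS s • v) = s * iS v) : Ideal (fiberProd eR eS) where
  carrier := {p | ∃ v : V, (p : R × S) = (iR v, iS v)}
  add_mem' := by
    rintro _ _ ⟨v, hv⟩ ⟨w, hw⟩
    exact ⟨v + w, by simp only [Subring.coe_add, hv, hw, map_add, Prod.mk_add_mk]⟩
  zero_mem' := ⟨0, by simp only [ZeroMemClass.coe_zero, map_zero, Prod.mk_zero_zero]⟩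
  smul_mem' := by
    rintro c _ ⟨v, hv⟩
    refine ⟨eR (c : R × S).1 • v, ?_⟩
    rw [smul_eq_mul, Subring.coe_mul, hv, hiR, fiberProd.condition, hiS]
    rfl

variable (hiR : ∀ (r : R) (v : V), iR (eR r • v) = r * iR v)
  (hiS : ∀ (s : S) (v : V), iS (eS s • v) = s * iS v)

theorem span_eq_connectingIdeal :
    Ideal.span {p : fiberProd eR eS | ∃ v : V, (p : R × S) = (iR v, iS v)} =
      connectingIdeal hiR hiS :=
  Ideal.span_eq (connectingIdeal hiR hiS)

theorem length_connectingIdeal (hR : Surjective eR) (hS : Surjective eS)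
    (hinjR : Injective iR) (hcomp : ∀ v : V, eR (iR v) = eS (iS v)) :
    Module.length (fiberProd eR eS) (connectingIdeal hiR hiS) = Module.length T V := by
  let f : V →+ connectingIdeal hiR hiS :=
    { toFun := fun v => ⟨⟨(iR v, iS v), hcomp v⟩, v, rfl⟩
      map_zero' := by ext <;> simp
      map_add' := fun v w => by ext <;> simp }
  refine (Module.length_eq_of_bijective_of_map_smul (σ := eR.comp (fiberProd.fst eR eS))
    (hR.comp (fiberProd.fst_surjective hS)) f ⟨fun v w hvw => ?_, ?_⟩ ?_).symm
  · exact hinjR (congrArg (fun p : connectingIdeal hiR hiS => (p.1 : R × S).1) hvw)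
  · rintro ⟨p, v, hv⟩
    exact ⟨v, Subtype.ext <| Subtype.ext hv.symm⟩
  · intro p v
    refine Subtype.ext <| Subtype.ext <| Prod.ext ?_ ?_
    · exact hiR _ v
    · exact (congrArg (iS <| · • v) (fiberProd.condition p)).trans (hiS _ v)

end ConnectingIdeal

theorem stmt12_general (R S T V : Type) [CommRing R] [CommRing S] [CommRing T]
    [AddCommGroup V] [Module T V]
    (eR : R →+* T) (eS : S →+* T)
    (hR : Function.Surjective eR) (hS : Function.Surjective eS)
    (iR : V →+ R) (iS : V →+ S)
    (hiR : ∀ (r : R) (v : V), iR (eR r • v) = r * iR v)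
    (hiS : ∀ (s : S) (v : V), iS (eS s • v) = s * iS v)
    (hinjR : Function.Injective iR)
    (hcomp : ∀ v : V, eR (iR v) = eS (iS v)) :
    lenE (↥(fiberProd eR eS) ⧸
        Ideal.span {p : ↥(fiberProd eR eS) | ∃ v : V, (p : R × S) = (iR v, iS v)})
      (↥(fiberProd eR eS) ⧸
        Ideal.span {p : ↥(fiberProd eR eS) | ∃ v : V, (p : R × S) = (iR v, iS v)})
      + lenE T T + lenE T V = lenE R R + lenE S S := by
  rw [span_eq_connectingIdeal hiR hiS]
  simp only [lenE_eq_length]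
  rw [← Module.length_eq_of_surjective (R := fiberProd eR eS ⧸ connectingIdeal hiR hiS)
      (S := fiberProd eR eS) Ideal.Quotient.mk_surjective,
    ← length_connectingIdeal hiR hiS hR hS hinjR hcomp,
    ← fiberProd.length_self_add_length hR hS,
    Module.length_eq_length_submodule_add_length_quotient (connectingIdeal hiR hiS)]
  ac_rfl

set_option synthInstance.maxHeartbeats 1000000 in
set_option maxHeartbeats 1000000 in
/-- length formula for the connected sum:
`length(R #_T S) + length T + length V = length R + length S`. -/
theorem stmt12 (R S T V : Type) [CommRing R] [CommRing S] [CommRing T]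
    [IsLocalRing R] [IsLocalRing S] [IsLocalRing T]
    [IsArtinianRing R] [IsArtinianRing S] [IsArtinianRing T]
    [AddCommGroup V] [Module T V] [Module.Finite T V]
    (eR : R →+* T) (eS : S →+* T)
    (hR : Function.Surjective eR) (hS : Function.Surjective eS)
    (iR : V →+ R) (iS : V →+ S)
    (hiR : ∀ (r : R) (v : V), iR (eR r • v) = r * iR v)
    (hiS : ∀ (s : S) (v : V), iS (eS s • v) = s * iS v)
    (hinjR : Function.Injective iR) (hinjS : Function.Injective iS)
    (hcomp : ∀ v : V, eR (iR v) = eS (iS v)) :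
    lenE (↥(fiberProd eR eS) ⧸
        Ideal.span {p : ↥(fiberProd eR eS) | ∃ v : V, (p : R × S) = (iR v, iS v)})
      (↥(fiberProd eR eS) ⧸
        Ideal.span {p : ↥(fiberProd eR eS) | ∃ v : V, (p : R × S) = (iR v, iS v)})
      + lenE T T + lenE T V = lenE R R + lenE S S :=
  stmt12_general R S T V eR eS hR hS iR iS hiR hiS hinjR hcomp

end
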